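/- arXiv:2512.01706 — 2 statements merged into one kernel-verified Lean document; each statement's English description precedes it below -/
import Mathlib

section
/- Stable decomposition bound (abstract Schwarz lemma, lower bound): if for every u ∈ ℝⁿ there exist u₀ ∈ ℝ^{n₀} and uᵢ ∈ ℝ^{mᵢ} with u = Φ u₀ + Σᵢ Rᵢᵀ uᵢ and u₀ᵀ A₀ u₀ + Σᵢ uᵢᵀ Aᵢ uᵢ ≤ C₀² uᵀ A u, then the preconditioned operator M⁻¹A satisfies uᵀ A u ≤ C₀² uᵀ A M⁻¹ A u for all u; in particular the smallest eigenvalue of M⁻¹A (with respect to the A-inner product) is at least C₀⁻². -/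
/-!
For SPD `B`, expanding `0 ≤ (t x - B⁻¹ v)ᵀ B (t x - B⁻¹ v)` gives
`2 t vᵀx - t² xᵀBx ≤ vᵀB⁻¹v`. Take a stable decomposition `u = Φ u₀ + Σᵢ Rᵢᵀ uᵢ` and apply this
to each piece, with `v` the corresponding restriction `Φᵀ w`, `Rᵢ w` of `w = A u`. Summing gives
`2 t uᵀAu - t² (u₀ᵀA₀u₀ + Σᵢ uᵢᵀAᵢuᵢ) ≤ wᵀM⁻¹w`; with the energy bounded by `C₀² uᵀAu` and
`t = C₀⁻²`, this is `uᵀAu ≤ C₀² uᵀAM⁻¹Au`.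
-/

open Matrix

/-- The two-level additive Schwarz preconditioner. -/
noncomputable def twoLevelOAS {n n₀ N : ℕ} {m : Fin N → ℕ}
    (A : Matrix (Fin n) (Fin n) ℝ)
    (R : (i : Fin N) → Matrix (Fin (m i)) (Fin n) ℝ)
    (Φ : Matrix (Fin n) (Fin n₀) ℝ) : Matrix (Fin n) (Fin n) ℝ :=
  Φ * (Φᵀ * A * Φ)⁻¹ * Φᵀ + ∑ i, (R i)ᵀ * (R i * A * (R i)ᵀ)⁻¹ * R i

theorem Matrix.mulVec_injective_of_rank_eq_card {ι κ K : Type*} [Fintype κ] [Field K]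
    {B : Matrix ι κ K} (hB : B.rank = Fintype.card κ) : Function.Injective B.mulVec := by
  rw [mulVec_injective_iff, linearIndependent_iff_card_eq_finrank_span, ← hB,
    rank_eq_finrank_span_cols]
  rfl

namespace Matrix

variable {ι κ : Type*} [Fintype ι] [Fintype κ]

theorem PosDef.transpose_mul_mul_same_of_rank_eq_card {A : Matrix ι ι ℝ} (hA : A.PosDef)
    {B : Matrix ι κ ℝ} (hB : B.rank = Fintype.card κ) : (Bᵀ * A * B).PosDef :=
  hA.conjTranspose_mul_mul_same (mulVec_injective_of_rank_eq_card hB)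

theorem dotProduct_transpose_mul_mul_mulVec (w : ι → ℝ) (Q : Matrix κ ι ℝ)
    (B : Matrix κ κ ℝ) : w ⬝ᵥ (Qᵀ * B * Q) *ᵥ w = (Q *ᵥ w) ⬝ᵥ B *ᵥ (Q *ᵥ w) := by
  rw [← mulVec_mulVec, ← mulVec_mulVec, dotProduct_mulVec, vecMul_transpose]

theorem PosDef.two_mul_dotProduct_sub_le [DecidableEq ι] {B : Matrix ι ι ℝ} (hB : B.PosDef)
    (v x : ι → ℝ) (t : ℝ) :
    2 * t * (v ⬝ᵥ x) - t ^ 2 * (x ⬝ᵥ B *ᵥ x) ≤ v ⬝ᵥ B⁻¹ *ᵥ v := by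
  set y := B⁻¹ *ᵥ v
  have hBy : B *ᵥ y = v := by
    rw [mulVec_mulVec, mul_nonsing_inv _ ((isUnit_iff_isUnit_det B).mp hB.isUnit), one_mulVec]
  have hyBx : y ⬝ᵥ B *ᵥ x = v ⬝ᵥ x := by
    rw [dotProduct_mulVec, ← mulVec_transpose, ← conjTranspose_eq_transpose_of_trivial,
      hB.isHermitian.eq, hBy]
  have hnonneg := hB.posSemidef.dotProduct_mulVec_nonneg (t • x - y)
  simp only [star_trivial, mulVec_sub, mulVec_smul, hBy, dotProduct_sub, sub_dotProduct,
    smul_dotProduct, dotProduct_smul, smul_eq_mul, hyBx] at hnonneg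
  rw [dotProduct_comm x v, dotProduct_comm y v] at hnonneg
  nlinarith [hnonneg]

end Matrix

section TwoLevel

variable {n n₀ N : ℕ} {m : Fin N → ℕ} (R : (i : Fin N) → Matrix (Fin (m i)) (Fin n) ℝ)
  (Φ : Matrix (Fin n) (Fin n₀) ℝ)

theorem dotProduct_mulVec_add_sum_transpose_mulVec (w : Fin n → ℝ) (u₀ : Fin n₀ → ℝ)
    (uloc : (i : Fin N) → Fin (m i) → ℝ) :
    w ⬝ᵥ (Φ *ᵥ u₀ + ∑ i, (R i)ᵀ *ᵥ uloc i) =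
      (Φᵀ *ᵥ w) ⬝ᵥ u₀ + ∑ i, (R i *ᵥ w) ⬝ᵥ uloc i := by
  simp only [dotProduct_add, dotProduct_sum, dotProduct_mulVec]
  simp only [vecMul_transpose, mulVec_transpose]

theorem dotProduct_twoLevelOAS_mulVec (A : Matrix (Fin n) (Fin n) ℝ) (w : Fin n → ℝ) :
    w ⬝ᵥ twoLevelOAS A R Φ *ᵥ w =
      (Φᵀ *ᵥ w) ⬝ᵥ (Φᵀ * A * Φ)⁻¹ *ᵥ (Φᵀ *ᵥ w) +
        ∑ i, (R i *ᵥ w) ⬝ᵥ (R i * A * (R i)ᵀ)⁻¹ *ᵥ (R i *ᵥ w) := by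
  rw [twoLevelOAS, add_mulVec, dotProduct_add, sum_mulVec, dotProduct_sum]
  simp only [← dotProduct_transpose_mul_mul_mulVec, transpose_transpose]

theorem two_mul_dotProduct_sub_energy_le_twoLevelOAS {A : Matrix (Fin n) (Fin n) ℝ}
    (hA₀ : (Φᵀ * A * Φ).PosDef) (hA : ∀ i, (R i * A * (R i)ᵀ).PosDef)
    (w : Fin n → ℝ) (u₀ : Fin n₀ → ℝ) (uloc : (i : Fin N) → Fin (m i) → ℝ) (t : ℝ) :
    2 * t * (w ⬝ᵥ (Φ *ᵥ u₀ + ∑ i, (R i)ᵀ *ᵥ uloc i)) -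
        t ^ 2 * (u₀ ⬝ᵥ (Φᵀ * A * Φ) *ᵥ u₀ + ∑ i, uloc i ⬝ᵥ (R i * A * (R i)ᵀ) *ᵥ uloc i) ≤
      w ⬝ᵥ twoLevelOAS A R Φ *ᵥ w := by
  rw [dotProduct_mulVec_add_sum_transpose_mulVec, dotProduct_twoLevelOAS_mulVec]
  have h₀ := hA₀.two_mul_dotProduct_sub_le (Φᵀ *ᵥ w) u₀ t
  have hloc := Finset.sum_le_sum fun i (_ : i ∈ Finset.univ) =>
    (hA i).two_mul_dotProduct_sub_le (R i *ᵥ w) (uloc i) t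
  simp only [Finset.sum_sub_distrib, ← Finset.mul_sum] at hloc
  linarith

end TwoLevel

/-- Abstract Schwarz lemma (lower bound): a stable decomposition with constant
`C₀²` implies `uᵀ A u ≤ C₀² uᵀ A M⁻¹ A u` for all `u`. -/
theorem stable_decomposition_lower_bound {n n₀ N : ℕ} {m : Fin N → ℕ}
    (A : Matrix (Fin n) (Fin n) ℝ) (hA : A.PosDef)
    (R : (i : Fin N) → Matrix (Fin (m i)) (Fin n) ℝ)
    (hR : ∀ i, (R i).rank = m i)
    (Φ : Matrix (Fin n) (Fin n₀) ℝ) (hΦ : Φ.rank = n₀)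
    (C₀ : ℝ) (hC₀ : 0 < C₀)
    (hstable : ∀ u : Fin n → ℝ, ∃ u₀ : Fin n₀ → ℝ,
      ∃ uloc : (i : Fin N) → Fin (m i) → ℝ,
        u = Φ *ᵥ u₀ + ∑ i, (R i)ᵀ *ᵥ uloc i ∧
        u₀ ⬝ᵥ ((Φᵀ * A * Φ) *ᵥ u₀) +
            ∑ i, uloc i ⬝ᵥ ((R i * A * (R i)ᵀ) *ᵥ uloc i) ≤
          C₀ ^ 2 * (u ⬝ᵥ (A *ᵥ u))) :
    ∀ u : Fin n → ℝ,
      u ⬝ᵥ (A *ᵥ u) ≤ C₀ ^ 2 * (u ⬝ᵥ (A *ᵥ (twoLevelOAS A R Φ *ᵥ (A *ᵥ u)))) := by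
  intro u
  obtain ⟨u₀, uloc, hu, hS⟩ := hstable u
  have hA₀ : (Φᵀ * A * Φ).PosDef :=
    hA.transpose_mul_mul_same_of_rank_eq_card (by simpa using hΦ)
  have hAᵢ : ∀ i, (R i * A * (R i)ᵀ).PosDef := fun i => by
    simpa using hA.transpose_mul_mul_same_of_rank_eq_card (B := (R i)ᵀ) (by simpa using hR i)
  have hAsymm : ∀ z, u ⬝ᵥ A *ᵥ z = (A *ᵥ u) ⬝ᵥ z := fun z => by
    rw [dotProduct_mulVec, ← mulVec_transpose, ← conjTranspose_eq_transpose_of_trivial,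
      hA.isHermitian.eq]
  obtain ⟨t, ht⟩ : ∃ t : ℝ, t * C₀ ^ 2 = 1 :=
    ⟨(C₀ ^ 2)⁻¹, inv_mul_cancel₀ (pow_ne_zero 2 hC₀.ne')⟩
  have key := two_mul_dotProduct_sub_energy_le_twoLevelOAS R Φ hA₀ hAᵢ (A *ᵥ u) u₀ uloc t
  rw [← hu, ← hAsymm, ← hAsymm] at key
  have hS' := mul_le_mul_of_nonneg_left hS (sq_nonneg t)
  calc u ⬝ᵥ A *ᵥ u = C₀ ^ 2 * (t * (u ⬝ᵥ A *ᵥ u)) := by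
        linear_combination -(u ⬝ᵥ A *ᵥ u) * ht
    _ ≤ C₀ ^ 2 * (u ⬝ᵥ A *ᵥ (twoLevelOAS A R Φ *ᵥ (A *ᵥ u))) := by
        gcongr
        linear_combination key + hS' + t * (u ⬝ᵥ A *ᵥ u) * ht
end

section
/- Convergence of the penalty formulation at the linear-algebra level: let A, B be real matrices with A ∈ ℝ^{n×n} SPD and B ∈ ℝ^{m×n} of full row rank, and consider the penalized system (A + ε⁻¹ BᵀB) u_ε = f. Then as ε → 0, u_ε converges to the solution u of the constrained saddle point problem A u + Bᵀ p = f, B u = 0; specifically, ‖u_ε − u‖ = O(ε). -/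
/-!
Write `e = u_ε - u`. Subtracting the saddle point equations from the penalized system gives
`A e = Bᵀ d` and `B e = ε (p - d)` for the discrete multiplier `d = p - ε⁻¹ B e`. As `B` has
full row rank, `p = B w` for some `w`, hence `e ⬝ A e = (B e) ⬝ d = ε (w ⬝ A e) - ε ‖d‖²`.
Since `w ⬝ A e ≤ C ‖e‖` with `C` depending only on `w` and `A`, coercivity of `A` turns
`e ⬝ A e ≤ ε (w ⬝ A e)` into `μ ‖e‖² ≤ ε C ‖e‖`, i.e. `‖e‖ ≤ (C / μ) ε`.
-/

open Matrix

theorem exists_pos_mul_sq_norm_le_of_homogeneous {E : Type*} [NormedAddCommGroup E]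
    [NormedSpace ℝ E] [FiniteDimensional ℝ E] {Q : E → ℝ} (hQ : Continuous Q)
    (hQ_smul : ∀ (c : ℝ) (x : E), Q (c • x) = c ^ 2 * Q x) (hQ_pos : ∀ x ≠ 0, 0 < Q x) :
    ∃ μ > 0, ∀ x, μ * ‖x‖ ^ 2 ≤ Q x := by
  obtain ⟨μ, hμ, hμQ⟩ := (isCompact_sphere (0 : E) 1).exists_forall_le' hQ.continuousOn
    fun x hx => hQ_pos x (ne_zero_of_mem_unit_sphere ⟨x, hx⟩)
  refine ⟨μ, hμ, fun x => ?_⟩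
  rcases eq_or_ne x 0 with rfl | hx
  · simpa using (hQ_smul 0 0).ge
  · have hx' : ‖x‖ ≠ 0 := norm_ne_zero_iff.mpr hx
    have hunit : ‖x‖⁻¹ • x ∈ Metric.sphere (0 : E) 1 := by simp [norm_smul, hx']
    calc μ * ‖x‖ ^ 2 ≤ Q (‖x‖⁻¹ • x) * ‖x‖ ^ 2 := by gcongr; exact hμQ _ hunit
      _ = Q x := by
        rw [hQ_smul, mul_comm, ← mul_assoc, ← mul_pow, mul_inv_cancel₀ hx', one_pow, one_mul]

theorem dotProduct_le_sum_abs_mul_norm {n : Type*} [Fintype n] (v x : n → ℝ) :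
    v ⬝ᵥ x ≤ (∑ i, |v i|) * ‖x‖ := by
  rw [Finset.sum_mul]
  refine Finset.sum_le_sum fun i _ => ?_
  calc v i * x i ≤ |v i| * |x i| := by rw [← abs_mul]; exact le_abs_self _
    _ ≤ |v i| * ‖x‖ := by gcongr; exact norm_le_pi_norm x i

namespace Matrix

variable {m n : Type*} [Fintype m] [Fintype n]

theorem exists_mulVec_eq_of_rank_eq {K : Type*} [Field K] {B : Matrix m n K}
    (hB : B.rank = Fintype.card m) (p : m → K) : ∃ w, B *ᵥ w = p :=
  LinearMap.range_eq_top.mp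
    (Submodule.eq_top_of_finrank_eq (by rw [Module.finrank_fintype_fun_eq_card]; exact hB)) p

theorem PosDef.exists_pos_mul_sq_norm_le {A : Matrix n n ℝ} (hA : A.PosDef) :
    ∃ μ > 0, ∀ x, μ * ‖x‖ ^ 2 ≤ x ⬝ᵥ A *ᵥ x :=
  exists_pos_mul_sq_norm_le_of_homogeneous (by fun_prop)
    (fun c x => by simp only [mulVec_smul, dotProduct_smul, smul_dotProduct, smul_eq_mul]; ring)
    (fun x hx => by simpa using hA.dotProduct_mulVec_pos hx)

theorem PosDef.add_smul_transpose_mul_self [DecidableEq n] {A : Matrix n n ℝ} (hA : A.PosDef)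
    (B : Matrix m n ℝ) {c : ℝ} (hc : 0 ≤ c) : (A + c • (Bᵀ * B)).PosDef :=
  hA.add_posSemidef (by simpa using (posSemidef_conjTranspose_mul_self B).smul hc)

theorem penalized_mulVec_sub_eq [DecidableEq n] {A : Matrix n n ℝ} (hA : A.PosDef)
    (B : Matrix m n ℝ) {c : ℝ} (hc : 0 ≤ c) {f u : n → ℝ} {p : m → ℝ}
    (h₁ : A *ᵥ u + Bᵀ *ᵥ p = f) (h₂ : B *ᵥ u = 0) :
    (A + c • (Bᵀ * B)) *ᵥ ((A + c • (Bᵀ * B))⁻¹ *ᵥ f - u) = Bᵀ *ᵥ p := by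
  have hdet := (isUnit_iff_isUnit_det _).mp (hA.add_smul_transpose_mul_self B hc).isUnit
  rw [mulVec_sub, mulVec_mulVec, mul_nonsing_inv _ hdet, one_mulVec, add_mulVec, smul_mulVec,
    ← mulVec_mulVec, h₂, mulVec_zero, smul_zero, add_zero, ← h₁, add_sub_cancel_left]

theorem penalty_energy_le {A : Matrix n n ℝ} {B : Matrix m n ℝ} {ε : ℝ} (hε : 0 < ε)
    {e w : n → ℝ} {p : m → ℝ} (he : (A + ε⁻¹ • (Bᵀ * B)) *ᵥ e = Bᵀ *ᵥ p) (hw : B *ᵥ w = p) :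
    e ⬝ᵥ A *ᵥ e ≤ ε * (w ⬝ᵥ A *ᵥ e) := by
  set d := p - ε⁻¹ • (B *ᵥ e)
  have hAe : A *ᵥ e = Bᵀ *ᵥ d := by
    rw [mulVec_sub, mulVec_smul, mulVec_mulVec, ← he, add_mulVec, smul_mulVec,
      add_sub_cancel_right]
  have hBe : B *ᵥ e = ε • (p - d) := by
    rw [sub_sub_cancel, smul_smul, mul_inv_cancel₀ hε.ne', one_smul]
  have hdual : ∀ v, v ⬝ᵥ Bᵀ *ᵥ d = B *ᵥ v ⬝ᵥ d := fun v => by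
    rw [dotProduct_mulVec, vecMul_transpose]
  have key : e ⬝ᵥ A *ᵥ e = ε * (w ⬝ᵥ A *ᵥ e) - ε * (d ⬝ᵥ d) := by
    rw [hAe, hdual, hdual, hBe, hw, smul_dotProduct, sub_dotProduct, smul_eq_mul, mul_sub]
  have hd : 0 ≤ d ⬝ᵥ d := by simpa using dotProduct_star_self_nonneg d
  linarith [mul_nonneg hε.le hd]

end Matrix

/-- Convergence of the penalty formulation at the linear-algebra level: the
solution `u_ε` of the penalized system `(A + ε⁻¹ BᵀB) u_ε = f` converges with
rate `O(ε)` to the solution `u` of the saddle point problem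
`A u + Bᵀ p = f`, `B u = 0`. -/
theorem penalty_convergence {n m : ℕ}
    (A : Matrix (Fin n) (Fin n) ℝ) (hA : A.PosDef)
    (B : Matrix (Fin m) (Fin n) ℝ) (hB : B.rank = m)
    (f u : Fin n → ℝ) (p : Fin m → ℝ)
    (hsaddle₁ : A *ᵥ u + Bᵀ *ᵥ p = f)
    (hsaddle₂ : B *ᵥ u = 0) :
    ∃ C : ℝ, ∀ ε : ℝ, 0 < ε →
      ‖(A + ε⁻¹ • (Bᵀ * B))⁻¹ *ᵥ f - u‖ ≤ C * ε := by
  obtain ⟨w, hw⟩ := exists_mulVec_eq_of_rank_eq (hB.trans (Fintype.card_fin m).symm) p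
  obtain ⟨μ, hμ, hcoercive⟩ := hA.exists_pos_mul_sq_norm_le
  set C := ∑ i, |(w ᵥ* A) i|
  refine ⟨C / μ, fun ε hε => ?_⟩
  set e := (A + ε⁻¹ • (Bᵀ * B))⁻¹ *ᵥ f - u
  have he := penalized_mulVec_sub_eq hA B (inv_nonneg.mpr hε.le) hsaddle₁ hsaddle₂
  have hsq : μ * ‖e‖ * ‖e‖ ≤ C * ε * ‖e‖ :=
    calc μ * ‖e‖ * ‖e‖ = μ * ‖e‖ ^ 2 := by ring
      _ ≤ e ⬝ᵥ A *ᵥ e := hcoercive e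
      _ ≤ ε * ((w ᵥ* A) ⬝ᵥ e) := by rw [← dotProduct_mulVec]; exact penalty_energy_le hε he hw
      _ ≤ ε * (C * ‖e‖) := by gcongr; exact dotProduct_le_sum_abs_mul_norm _ _
      _ = C * ε * ‖e‖ := by ring
  rw [div_mul_eq_mul_div, le_div_iff₀' hμ]
  rcases (norm_nonneg e).eq_or_lt with he0 | hepos
  · rw [← he0, mul_zero]; positivity
  · exact le_of_mul_le_mul_right hsq hepos
end
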